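/- There exists a constant C>0, independent of λ, such that for every λ∈𝒥∖({0}∪Σ4∪Σ5) there are infinitely many m∈ℕ with |R^{∘m}(λ)|>C and |R^{∘m}(λ)−4|>C. -/

import Mathlib

/-!
The points `0` and `4` are repelling fixed points of `R(z) = z(5 - z)`, with multipliers `5`
and `-3`. On the disc of radius `1/10` around either of them, `R` multiplies the distance to that
fixed point by a factor `> 1`, so an orbit starting there and never hitting the fixed point must
leave the disc. One step earlier it was still inside, which bounds how far it can jump, so it
lands at distance `> 1/10` from both fixed points. Applying this to the orbit from every time `N`
on gives infinitely many such times. Orbits outside `{0} ∪ Σ₄ ∪ Σ₅` never hit `4`, and never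
hit `0` because `R⁻¹{0} = {0, 5}`.
-/

noncomputable section

namespace SGpaper

/-- The polynomial `R(λ) = λ(5-λ)` of spectral decimation. -/
def R : ℂ → ℂ := fun z => z * (5 - z)

/-- The Julia set of `R`: points with bounded forward orbit. -/
def Julia : Set ℂ := {z | Bornology.IsBounded (Set.range fun n => R^[n] z)}

/-- `Σ₅ = ⋃_m R^{-m}{5}`. -/
def Sigma5 : Set ℂ := ⋃ m : ℕ, R^[m] ⁻¹' {5}

/-- `Σ₄ = ⋃_m R^{-m}{4}`. -/
def Sigma4 : Set ℂ := ⋃ m : ℕ, R^[m] ⁻¹' {4}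

lemma exists_iterate_escape {X : Type*} (T : X → X) (d : X → ℝ) {c r M : ℝ} (hr : 1 < r)
    (hgrow : ∀ y, d y ≤ c → r * d y ≤ d (T y)) (hbound : ∀ y, d y ≤ c → d (T y) ≤ M)
    {x : X} (hx : 0 < d x) (hxc : d x ≤ c) : ∃ n, c < d (T^[n] x) ∧ d (T^[n] x) ≤ M := by
  -- induction on a number `N` of steps after which growth alone would push `d` above `c`
  suffices key : ∀ N y, 0 < d y → d y ≤ c → c < r ^ N * d y →
      ∃ n, c < d (T^[n] y) ∧ d (T^[n] y) ≤ M by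
    obtain ⟨N, hN⟩ := pow_unbounded_of_one_lt (c / d x) hr
    exact key N x hx hxc ((div_lt_iff₀ hx).1 hN)
  intro N
  induction N with
  | zero => intro y _ hyc hlt; linarith
  | succ N ih =>
    intro y hy hyc hlt
    have hTy : r * d y ≤ d (T y) := hgrow y hyc
    by_cases hTyc : c < d (T y)
    · exact ⟨1, hTyc, hbound y hyc⟩
    · obtain ⟨n, hn⟩ := ih (T y) (by nlinarith) (not_lt.1 hTyc) <| by
        calc c < r ^ (N + 1) * d y := hlt
          _ = r ^ N * (r * d y) := by ring
          _ ≤ r ^ N * d (T y) := by gcongr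
      exact ⟨n + 1, hn⟩

lemma norm_R (w : ℂ) : ‖R w‖ = ‖w‖ * ‖5 - w‖ := norm_mul _ _

lemma norm_R_sub_four (w : ℂ) : ‖R w - 4‖ = ‖w - 4‖ * ‖w - 1‖ := by
  rw [show R w - 4 = -((w - 4) * (w - 1)) by simp only [R]; ring, norm_neg, norm_mul]

lemma R_eq_zero_iff {w : ℂ} : R w = 0 ↔ w = 0 ∨ w = 5 := by
  simp only [R, mul_eq_zero, sub_eq_zero, eq_comm (a := (5 : ℂ))]

lemma iterate_R_ne_zero {z : ℂ} (hz : z ≠ 0) (h5 : ∀ m, R^[m] z ≠ 5) (m : ℕ) :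
    R^[m] z ≠ 0 := by
  induction m with
  | zero => exact hz
  | succ m ih =>
    rw [Function.iterate_succ_apply', Ne, R_eq_zero_iff, not_or]
    exact ⟨ih, h5 m⟩

lemma exists_iterate_R_away_of_near_zero {w : ℂ} (hw : w ≠ 0) (hwc : ‖w‖ ≤ 1 / 10) :
    ∃ n, 1 / 10 < ‖R^[n] w‖ ∧ 1 / 10 < ‖R^[n] w - 4‖ := by
  have hfactor : ∀ y : ℂ, ‖y‖ ≤ 1 / 10 → 49 / 10 ≤ ‖5 - y‖ ∧ ‖5 - y‖ ≤ 51 / 10 := fun y hy => by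
    have h₁ := norm_sub_norm_le (5 : ℂ) y
    have h₂ := norm_sub_le (5 : ℂ) y
    rw [Complex.norm_ofNat] at h₁ h₂
    constructor <;> linarith
  obtain ⟨n, hlow, hup⟩ := exists_iterate_escape R (‖·‖) (c := 1 / 10) (r := 49 / 10)
    (M := 51 / 100) (by norm_num)
    (fun y hy => by rw [norm_R]; nlinarith [hfactor y hy, norm_nonneg y])
    (fun y hy => by rw [norm_R]; nlinarith [hfactor y hy, norm_nonneg y])
    (norm_pos_iff.2 hw) hwc
  refine ⟨n, hlow, ?_⟩
  have := norm_sub_norm_le (4 : ℂ) (R^[n] w)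
  rw [Complex.norm_ofNat, norm_sub_rev] at this
  linarith

lemma exists_iterate_R_away_of_near_four {w : ℂ} (hw : w ≠ 4) (hwc : ‖w - 4‖ ≤ 1 / 10) :
    ∃ n, 1 / 10 < ‖R^[n] w‖ ∧ 1 / 10 < ‖R^[n] w - 4‖ := by
  have hfactor : ∀ y : ℂ, ‖y - 4‖ ≤ 1 / 10 → 29 / 10 ≤ ‖y - 1‖ ∧ ‖y - 1‖ ≤ 31 / 10 :=
    fun y hy => by
    have h₁ := norm_sub_le (y - 1) (y - 4)
    have h₂ := norm_add_le (y - 4) 3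
    rw [show y - 1 - (y - 4) = 3 by ring, Complex.norm_ofNat] at h₁
    rw [show y - 4 + 3 = y - 1 by ring, Complex.norm_ofNat] at h₂
    constructor <;> linarith
  obtain ⟨n, hlow, hup⟩ := exists_iterate_escape R (‖· - 4‖) (c := 1 / 10) (r := 29 / 10)
    (M := 31 / 100) (by norm_num)
    (fun y hy => by rw [norm_R_sub_four]; nlinarith [hfactor y hy, norm_nonneg (y - 4)])
    (fun y hy => by rw [norm_R_sub_four]; nlinarith [hfactor y hy, norm_nonneg (y - 4)])
    (norm_pos_iff.2 (sub_ne_zero.2 hw)) hwc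
  refine ⟨n, ?_, hlow⟩
  have := norm_sub_norm_le (4 : ℂ) (4 - R^[n] w)
  rw [Complex.norm_ofNat, norm_sub_rev, sub_sub_cancel] at this
  linarith

lemma exists_iterate_R_away {w : ℂ} (h0 : w ≠ 0) (h4 : w ≠ 4) :
    ∃ n, 1 / 10 < ‖R^[n] w‖ ∧ 1 / 10 < ‖R^[n] w - 4‖ := by
  by_cases hnear0 : ‖w‖ ≤ 1 / 10
  · exact exists_iterate_R_away_of_near_zero h0 hnear0
  by_cases hnear4 : ‖w - 4‖ ≤ 1 / 10
  · exact exists_iterate_R_away_of_near_four h4 hnear4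
  exact ⟨0, not_le.1 hnear0, not_le.1 hnear4⟩

/-- **Statement 12.** There is a constant `C > 0`, independent of `λ`, such that for every
`λ ∈ 𝒥 \ ({0} ∪ Σ₄ ∪ Σ₅)` there are infinitely many `m` with `|R^{∘m}(λ)| > C` and
`|R^{∘m}(λ) - 4| > C`. -/
theorem orbit_infinitely_often_away_from_zero_four :
    ∃ C : ℝ, 0 < C ∧ ∀ lam ∈ Julia \ ({0} ∪ Sigma4 ∪ Sigma5),
      {m : ℕ | C < ‖R^[m] lam‖ ∧ C < ‖R^[m] lam - 4‖}.Infinite := by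
  refine ⟨1 / 10, by norm_num, fun lam hlam => ?_⟩
  simp only [Sigma4, Sigma5, Set.mem_sdiff, Set.mem_union, Set.mem_singleton_iff, Set.mem_iUnion,
    Set.mem_preimage, not_or, not_exists] at hlam
  obtain ⟨-, ⟨hlam0, hlam4⟩, hlam5⟩ := hlam
  refine Set.infinite_of_forall_exists_gt fun N => ?_
  obtain ⟨n, hn⟩ :=
    exists_iterate_R_away (iterate_R_ne_zero hlam0 hlam5 (N + 1)) (hlam4 (N + 1))
  refine ⟨n + (N + 1), ?_, by omega⟩
  rwa [Set.mem_ofPred_eq, Function.iterate_add_apply]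

end SGpaper
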